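/- Let A and B be Hermitian n×n complex matrices and let γ : [0,∞) → ℝ be a continuous, nondecreasing function. If ‖exp(−iAt) − exp(−iBt)‖₂ ≤ t·γ(t) for all t ≥ 0, then ‖A − B‖₂ ≤ γ(t) for every t ≥ 0. -/

import Mathlib

/-- Spectral norm: the operator norm on `n × n` complex matrices induced by the
Euclidean norm on `ℂⁿ`. -/
noncomputable def specNorm {n : ℕ} (A : Matrix (Fin n) (Fin n) ℂ) : ℝ :=
  ‖Matrix.toEuclideanCLM (𝕜 := ℂ) A‖

/-!
The difference `F t = exp(-iAt) - exp(-iBt)` vanishes at `t = 0` and has derivative `-i(A - B)`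
there, so `‖A - B‖` is the limit of the slopes `‖F t‖ / t ≤ γ t` as `t → 0⁺`, hence at most
`γ 0 ≤ γ t`.
-/

open Filter Topology NormedSpace

theorem norm_le_of_hasDerivWithinAt_of_norm_le_mul {E : Type*} [NormedAddCommGroup E]
    [NormedSpace ℝ E] {F : ℝ → E} {v : E} {γ : ℝ → ℝ}
    (hF : HasDerivWithinAt F v (Set.Ioi 0) 0) (hF0 : F 0 = 0)
    (hγ : ContinuousWithinAt γ (Set.Ioi 0) 0) (hle : ∀ s > 0, ‖F s‖ ≤ s * γ s) :
    ‖v‖ ≤ γ 0 := by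
  have hslope : Tendsto (fun s => ‖slope F 0 s‖) (𝓝[>] 0) (𝓝 ‖v‖) :=
    (hasDerivWithinAt_iff_tendsto_slope' (by simp)).mp hF |>.norm
  refine le_of_tendsto_of_tendsto hslope hγ ?_
  filter_upwards [self_mem_nhdsWithin] with s (hs : 0 < s)
  rw [slope_def_module, hF0, sub_zero, sub_zero, norm_smul, norm_inv, Real.norm_of_nonneg hs.le,
    inv_mul_le_iff₀ hs]
  exact hle s hs

theorem hasDerivAt_exp_smul_sub_exp_smul {𝔸 : Type*} [NormedRing 𝔸] [NormedAlgebra ℝ 𝔸]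
    [CompleteSpace 𝔸] (x y : 𝔸) :
    HasDerivAt (fun s : ℝ => exp (s • x) - exp (s • y)) (x - y) 0 := by
  have h := (hasDerivAt_exp_smul_const x (0 : ℝ)).sub (hasDerivAt_exp_smul_const y (0 : ℝ))
  rwa [zero_smul, zero_smul, exp_zero, one_mul, one_mul] at h

theorem norm_sub_le_of_norm_exp_sub_le {𝔸 : Type*} [NormedRing 𝔸] [NormedAlgebra ℂ 𝔸]
    [CompleteSpace 𝔸] {a b : 𝔸} {γ : ℝ → ℝ} (hγ : ContinuousWithinAt γ (Set.Ioi 0) 0)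
    (h : ∀ t : ℝ, 0 < t →
      ‖exp ((-(Complex.I * t)) • a) - exp ((-(Complex.I * t)) • b)‖ ≤ t * γ t) :
    ‖a - b‖ ≤ γ 0 := by
  have hsmul : ∀ (t : ℝ) (c : 𝔸), (-(Complex.I * t)) • c = t • (-Complex.I • c) := by
    intro t c
    rw [← Complex.coe_smul, smul_smul, mul_neg, mul_comm]
  have := norm_le_of_hasDerivWithinAt_of_norm_le_mul
    (hasDerivAt_exp_smul_sub_exp_smul (-Complex.I • a) (-Complex.I • b)).hasDerivWithinAt
    (by simp) hγ (fun t ht => by simpa only [hsmul] using h t ht)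
  rwa [← smul_sub, norm_smul, norm_neg, Complex.norm_I, one_mul] at this

theorem Matrix.toEuclideanCLM_exp {𝕜 n : Type*} [RCLike 𝕜] [Fintype n] [DecidableEq n]
    (M : Matrix n n 𝕜) : toEuclideanCLM (𝕜 := 𝕜) (exp M) = exp (toEuclideanCLM (𝕜 := 𝕜) M) :=
  -- `exp` only depends on the topology, so any matrix norm will do for `map_exp`.
  open scoped Matrix.Norms.Operator in
  map_exp toEuclideanCLM (LinearMap.continuous_of_finiteDimensional
    (toEuclideanCLM (𝕜 := 𝕜) (n := n)).toAlgEquiv.toLinearMap) M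

theorem norm_sub_le_gamma_general {n : ℕ} (A B : Matrix (Fin n) (Fin n) ℂ) (γ : ℝ → ℝ)
    (hγcont : ContinuousOn γ (Set.Ici 0)) (hγmono : MonotoneOn γ (Set.Ici 0))
    (hbound : ∀ t : ℝ, 0 ≤ t →
      specNorm (NormedSpace.exp ((-(Complex.I * t)) • A)
        - NormedSpace.exp ((-(Complex.I * t)) • B)) ≤ t * γ t) :
    ∀ t : ℝ, 0 ≤ t → specNorm (A - B) ≤ γ t := by
  intro t ht
  have hγ0 : ContinuousWithinAt γ (Set.Ioi 0) 0 :=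
    (hγcont 0 Set.self_mem_Ici).mono Set.Ioi_subset_Ici_self
  calc specNorm (A - B) ≤ γ 0 := by
        rw [specNorm, map_sub]
        refine norm_sub_le_of_norm_exp_sub_le hγ0 fun s hs => ?_
        simpa only [specNorm, map_sub, Matrix.toEuclideanCLM_exp, map_smul] using hbound s hs.le
    _ ≤ γ t := hγmono Set.self_mem_Ici ht ht

/-- If `A`, `B` are Hermitian and `γ : [0,∞) → ℝ` is continuous and nondecreasing with
`‖exp(−iAt) − exp(−iBt)‖₂ ≤ t·γ(t)` for all `t ≥ 0`, then `‖A − B‖₂ ≤ γ(t)` for all `t ≥ 0`. -/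
theorem norm_sub_le_gamma {n : ℕ} (A B : Matrix (Fin n) (Fin n) ℂ)
    (hA : A.IsHermitian) (hB : B.IsHermitian) (γ : ℝ → ℝ)
    (hγcont : ContinuousOn γ (Set.Ici 0)) (hγmono : MonotoneOn γ (Set.Ici 0))
    (hbound : ∀ t : ℝ, 0 ≤ t →
      specNorm (NormedSpace.exp ((-(Complex.I * t)) • A)
        - NormedSpace.exp ((-(Complex.I * t)) • B)) ≤ t * γ t) :
    ∀ t : ℝ, 0 ≤ t → specNorm (A - B) ≤ γ t :=
  norm_sub_le_gamma_general A B γ hγcont hγmono hbound
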